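/- If p is a borderless word (its only border is p itself) and q is a distinct borderless word of the same length over the same finite alphabet, then for all n the number of length-n words avoiding p equals the number of length-n words avoiding q. -/

import Mathlib

open List

/-- A nonempty word `x` is a border of `p` if it is both a prefix and a suffix of `p`. -/
def Border {α : Type*} (x p : List α) : Prop := x ≠ [] ∧ x <+: p ∧ x <:+ p

/-- A proper border is a border different from the word itself. -/
def ProperBorder {α : Type*} (x p : List α) : Prop := Border x p ∧ x ≠ p

/-- The border length set of `p`. -/
def borderLengths {α : Type*} (p : List α) : Set ℕ :=
  {n | ∃ x, Border x p ∧ x.length = n}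

/-- `replL q p w` replaces the leftmost contiguous occurrence of `q` in `w` by `p`
(identity if there is no occurrence). -/
def replL {α : Type*} [DecidableEq α] (q p : List α) : List α → List α
  | [] => []
  | a :: w => if q <+: (a :: w) then p ++ (a :: w).drop q.length else a :: replL q p w

/-- `replR p q w` replaces the rightmost contiguous occurrence of `p` in `w` by `q`
(identity if there is no occurrence). -/
def replR {α : Type*} [DecidableEq α] (p q : List α) : List α → List α
  | [] => []
  | a :: w =>
    if p <:+: w then a :: replR p q w
    else if p <+: (a :: w) then q ++ (a :: w).drop p.length
    else a :: w

/-- `phiL q p w` iterates `replL q p` a minimal number of times so that no occurrence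
of `q` remains (if such an iterate exists). -/
noncomputable def phiL {α : Type*} [DecidableEq α] (q p : List α) (w : List α) : List α :=
  (replL q p)^[sInf {i | ¬ q <:+: (replL q p)^[i] w}] w

/-- `phiR p q w` iterates `replR p q` a minimal number of times so that no occurrence
of `p` remains (if such an iterate exists). -/
noncomputable def phiR {α : Type*} [DecidableEq α] (p q : List α) (w : List α) : List α :=
  (replR p q)^[sInf {j | ¬ p <:+: (replR p q)^[j] w}] w

/-!
Only the length `m` of a borderless word `p` matters. Classify the words `a :: v` with `v` of
length `n` avoiding `p`: either `a :: v` avoids `p`, or `p` occurs in `a :: v` only as a prefix,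
`a :: v = p ++ u`. Since `p` is borderless, an occurrence of `p` in `p.tail ++ u` cannot overlap
`p.tail`, so the second kind are exactly the words `p ++ u` with `u` avoiding `p`. Hence the
number `c n` of length-`n` words avoiding `p` satisfies `c (n + 1) + c (n + 1 - m) = |α| c n`
for `n + 1 ≥ m`, and `c n = |α| ^ n` for `n < m`, which determines it from `m` alone.
-/

section Avoiding

variable {α : Type*}

def avoiding (p : List α) (n : ℕ) : Set (List α) := {w | w.length = n ∧ ¬ p <:+: w}

theorem avoiding_of_lt_length {p : List α} {n : ℕ} (h : n < p.length) :
    avoiding p n = {w | w.length = n} := by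
  ext w
  exact ⟨And.left, fun hw => ⟨hw, fun hpw => (hpw.length_le.trans_eq hw).not_gt h⟩⟩

theorem infix_of_infix_tail_append {p u : List α} (hp : ¬ ∃ x, ProperBorder x p)
    (h : p <:+: p.tail ++ u) : p <:+: u := by
  obtain ⟨s, t, h⟩ := h
  rw [append_assoc, append_eq_append_iff] at h
  rcases h with ⟨a, htail, hpt⟩ | ⟨c, -, rfl⟩
  · rcases eq_or_ne a [] with rfl | ha
    · exact ⟨[], t, by simpa using hpt⟩
    · -- the overlap `a` would be a proper border of `p`
      have hlen : a.length < p.length := by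
        have hlen_tail := congrArg length htail
        have ha_pos := length_pos_of_ne_nil ha
        rw [length_tail, length_append] at hlen_tail
        omega
      refine absurd ⟨a, ⟨ha, ?_, ?_⟩, ?_⟩ hp
      · exact prefix_of_prefix_length_le ⟨u, hpt.symm⟩ ⟨t, rfl⟩ hlen.le
      · exact IsSuffix.trans ⟨s, htail.symm⟩ (tail_suffix p)
      · rintro rfl
        exact hlen.false
  · exact ⟨c, t, by rw [append_assoc]⟩

theorem cons_image_avoiding {p : List α} (hp : ¬ ∃ x, ProperBorder x p) (hp0 : p ≠ [])
    {n : ℕ} (hn : p.length ≤ n + 1) :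
    (fun x : α × List α => x.1 :: x.2) '' (Set.univ ×ˢ avoiding p n) =
      avoiding p (n + 1) ∪ (p ++ ·) '' avoiding p (n + 1 - p.length) := by
  have := length_pos_of_ne_nil hp0
  ext w
  simp only [avoiding, Set.mem_image, Set.mem_prod, Set.mem_univ, true_and, Set.mem_union,
    Set.mem_ofPred_eq, Prod.exists]
  constructor
  · rintro ⟨a, v, ⟨hv, hpv⟩, rfl⟩
    by_cases hpre : p <+: a :: v
    · obtain ⟨u, hu⟩ := hpre
      have hv' : v = p.tail ++ u := by
        rw [← tail_append_of_ne_nil hp0, hu, tail_cons]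
      subst hv'
      refine Or.inr ⟨u, ⟨?_, fun h => hpv (h.trans (suffix_append _ u).isInfix)⟩, hu⟩
      rw [length_append, length_tail] at hv
      omega
    · exact Or.inl ⟨by simpa using hv, fun h => (infix_cons_iff.mp h).elim hpre hpv⟩
  · rintro (⟨hw, hpw⟩ | ⟨u, ⟨hu, hpu⟩, rfl⟩)
    · obtain ⟨a, v, rfl⟩ := exists_cons_of_ne_nil (ne_nil_of_length_eq_add_one hw)
      refine ⟨a, v, ⟨by simpa using hw, fun h => hpw ?_⟩, rfl⟩
      exact h.trans (suffix_cons a v).isInfix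
    · refine ⟨p.head hp0, p.tail ++ u,
        ⟨?_, fun h => hpu (infix_of_infix_tail_append hp h)⟩, ?_⟩
      · rw [length_append, length_tail]
        omega
      · rw [← cons_append, cons_head_tail]

theorem ncard_avoiding_succ_add [Finite α] {p : List α} (hp : ¬ ∃ x, ProperBorder x p)
    (hp0 : p ≠ []) {n : ℕ} (hn : p.length ≤ n + 1) :
    (avoiding p (n + 1)).ncard + (avoiding p (n + 1 - p.length)).ncard =
      Nat.card α * (avoiding p n).ncard := by
  have hfin : ∀ k, (avoiding p k).Finite := fun k =>
    (finite_length_eq α k).subset fun _ => And.left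
  have hdisj : Disjoint (avoiding p (n + 1)) ((p ++ ·) '' avoiding p (n + 1 - p.length)) :=
    Set.disjoint_left.mpr fun _ hw ⟨u, _, hu⟩ => hw.2 (hu ▸ (prefix_append p u).isInfix)
  have hcons : Function.Injective (fun x : α × List α => x.1 :: x.2) := fun _ _ h =>
    Prod.ext (cons_eq_cons.mp h).1 (cons_eq_cons.mp h).2
  rw [← Set.ncard_image_of_injective (avoiding p (n + 1 - p.length)) (append_right_injective p),
    ← Set.ncard_union_eq hdisj (hfin _) ((hfin _).image _), ← cons_image_avoiding hp hp0 hn,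
    Set.ncard_image_of_injective _ hcons, Set.ncard_prod, Set.ncard_univ]

theorem ncard_avoiding_eq_of_length_eq [Finite α] {p q : List α} (hlen : p.length = q.length)
    (hp : ¬ ∃ x, ProperBorder x p) (hq : ¬ ∃ x, ProperBorder x q) (n : ℕ) :
    (avoiding p n).ncard = (avoiding q n).ncard := by
  rcases eq_or_ne p [] with rfl | hp0
  · rw [length_eq_zero_iff.mp hlen.symm]
  have hp_pos := length_pos_of_ne_nil hp0
  have hq0 : q ≠ [] := by rwa [← length_pos_iff, ← hlen]
  induction n using Nat.strong_induction_on with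
  | _ n ih =>
    rcases lt_or_ge n p.length with hn | hn
    · rw [avoiding_of_lt_length hn, avoiding_of_lt_length (hlen ▸ hn)]
    · obtain ⟨k, rfl⟩ : ∃ k, n = k + 1 := ⟨n - 1, by omega⟩
      have hrec_p := ncard_avoiding_succ_add hp hp0 hn
      have hrec_q := ncard_avoiding_succ_add hq hq0 (hlen ▸ hn)
      rw [← hlen, ← ih k (by omega), ← ih (k + 1 - p.length) (by omega)] at hrec_q
      omega

end Avoiding

theorem stmt_16_general {α : Type*} [Fintype α] {p q : List α}
    (hlen : p.length = q.length)
    (hp : ¬ ∃ x, ProperBorder x p) (hq : ¬ ∃ x, ProperBorder x q) (n : ℕ) :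
    {w : List α | w.length = n ∧ ¬ p <:+: w}.ncard =
      {w : List α | w.length = n ∧ ¬ q <:+: w}.ncard :=
  ncard_avoiding_eq_of_length_eq hlen hp hq n

/-- If `p` and `q` are distinct borderless words of the same length over a finite
alphabet, then for all `n` the number of length-`n` words avoiding `p` equals the number
of length-`n` words avoiding `q`. -/
theorem stmt_16 {α : Type*} [Fintype α] [DecidableEq α] {p q : List α}
    (hne : p ≠ q) (hlen : p.length = q.length)
    (hp : ¬ ∃ x, ProperBorder x p) (hq : ¬ ∃ x, ProperBorder x q) (n : ℕ) :
    {w : List α | w.length = n ∧ ¬ p <:+: w}.ncard =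
      {w : List α | w.length = n ∧ ¬ q <:+: w}.ncard :=
  stmt_16_general hlen hp hq n
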